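/- arXiv:2605.14901 — 5 statements merged into one kernel-verified Lean document; each statement's English description precedes it below -/
import Mathlib

section
/- Let μ and ν be Borel probability measures on ℝ, both supported on [0,∞). Assume there exists K > 0 such that ν([0,K]) = 1, that μ has finite moments of every order, and that ∫ x^k dν(x) = ∫ x^k dμ(x) for every integer k ≥ 1. Then μ = ν. -/
open MeasureTheory
open scoped NNReal ENNReal BoundedContinuousFunction

/-- Two Borel probability measures on `ℝ` supported on `[0,∞)`, one of which is
supported on a compact interval `[0,K]`, with all moments finite and equal,
must coincide. -/
theorem moments_determine_measure
    (μ ν : Measure ℝ) [IsProbabilityMeasure μ] [IsProbabilityMeasure ν]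
    (hμsupp : μ (Set.Ici (0 : ℝ)) = 1) (hνsupp : ν (Set.Ici (0 : ℝ)) = 1)
    (K : ℝ) (hK : 0 < K) (hνK : ν (Set.Icc (0 : ℝ) K) = 1)
    (hμint : ∀ k : ℕ, 1 ≤ k → Integrable (fun x : ℝ => x ^ k) μ)
    (hmom : ∀ k : ℕ, 1 ≤ k → ∫ x, x ^ k ∂ν = ∫ x, x ^ k ∂μ) :
    μ = ν := by
  -- a.e. nonnegativity for μ
  have hμcompl : μ (Set.Ici (0 : ℝ))ᶜ = 0 := by
    rw [measure_compl measurableSet_Ici (measure_ne_top _ _), hμsupp, measure_univ]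
    simp
  have hμ0 : ∀ᵐ x ∂μ, 0 ≤ x := by
    rw [ae_iff]
    refine measure_mono_null ?_ hμcompl
    intro x hx
    simpa using hx
  -- a.e. x ∈ [0,K] for ν
  have hνae : ∀ᵐ x ∂ν, x ∈ Set.Icc (0 : ℝ) K := by
    rw [ae_iff]
    have : ν (Set.Icc (0 : ℝ) K)ᶜ = 0 := by
      rw [measure_compl measurableSet_Icc (measure_ne_top _ _), hνK, measure_univ]
      simp
    refine measure_mono_null ?_ this
    intro x hx
    exact hx
  -- ν-integrability of monomials
  have hνint : ∀ k : ℕ, Integrable (fun x : ℝ => x ^ k) ν := by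
    intro k
    refine Integrable.mono' (integrable_const (K ^ k))
      (continuous_pow k).measurable.aestronglyMeasurable ?_
    filter_upwards [hνae] with x hx
    rw [Real.norm_eq_abs, abs_of_nonneg (pow_nonneg hx.1 k)]
    exact pow_le_pow_left₀ hx.1 hx.2 k
  -- moments of ν are at most K^k
  have hνle : ∀ k : ℕ, ∫ x, x ^ k ∂ν ≤ K ^ k := by
    intro k
    have : ∫ x, x ^ k ∂ν ≤ ∫ _x, K ^ k ∂ν := by
      refine integral_mono_ae (hνint k) (integrable_const _) ?_
      filter_upwards [hνae] with x hx
      exact pow_le_pow_left₀ hx.1 hx.2 k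
    simpa using this
  -- μ gives no mass beyond K
  have hkey : ∀ a : ℝ, K < a → μ (Set.Ici a) = 0 := by
    intro a ha
    have ha0 : 0 < a := hK.trans ha
    set c := (μ (Set.Ici a)).toReal with hc_def
    have hc : ∀ k : ℕ, 1 ≤ k → c * a ^ k ≤ K ^ k := by
      intro k hk
      have h1 : ∫ x, (Set.Ici a).indicator (fun _ => a ^ k) x ∂μ ≤ ∫ x, x ^ k ∂μ := by
        refine integral_mono_ae ((integrable_const (a ^ k)).indicator measurableSet_Ici)
          (hμint k hk) ?_
        filter_upwards [hμ0] with x hx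
        by_cases hxa : x ∈ Set.Ici a
        · rw [Set.indicator_of_mem hxa]
          exact pow_le_pow_left₀ ha0.le hxa k
        · rw [Set.indicator_of_notMem hxa]
          exact pow_nonneg hx k
      rw [integral_indicator_const _ measurableSet_Ici] at h1
      have h2 := (hmom k hk).symm.le.trans (hνle k)
      calc c * a ^ k = (μ (Set.Ici a)).toReal • a ^ k := by rw [smul_eq_mul]
        _ ≤ ∫ x, x ^ k ∂μ := h1
        _ ≤ K ^ k := h2
    have hc0 : 0 ≤ c := ENNReal.toReal_nonneg
    have hlim : Filter.Tendsto (fun k : ℕ => (K / a) ^ k) Filter.atTop (nhds 0) := by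
      apply tendsto_pow_atTop_nhds_zero_of_lt_one (by positivity)
      rw [div_lt_one ha0]
      exact ha
    have hle : ∀ᶠ k in Filter.atTop, c ≤ (K / a) ^ k := by
      filter_upwards [Filter.eventually_ge_atTop 1] with k hk
      have := hc k hk
      rw [div_pow, le_div_iff₀ (by positivity)]
      linarith [this]
    have : c ≤ 0 := ge_of_tendsto hlim hle
    have hceq : c = 0 := le_antisymm this hc0
    rw [hc_def] at hceq
    exact (ENNReal.toReal_eq_zero_iff _).mp hceq |>.resolve_right (measure_ne_top _ _)
  have hμIoi : μ (Set.Ioi K) = 0 := by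
    have hsub : Set.Ioi K ⊆ ⋃ n : ℕ, Set.Ici (K + 1 / ((n : ℝ) + 1)) := by
      intro x hx
      obtain ⟨n, hn⟩ := exists_nat_one_div_lt (sub_pos.mpr (Set.mem_Ioi.mp hx))
      exact Set.mem_iUnion.mpr ⟨n, by simp only [Set.mem_Ici]; linarith⟩
    refine measure_mono_null hsub (measure_iUnion_null fun n => hkey _ ?_)
    have : 0 < 1 / ((n : ℝ) + 1) := by positivity
    linarith
  -- a.e. x ∈ [0,K] for μ
  have hμae : ∀ᵐ x ∂μ, x ∈ Set.Icc (0 : ℝ) K := by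
    rw [ae_iff]
    refine measure_mono_null ?_ (measure_union_null hμcompl hμIoi)
    intro x hx
    simp only [Set.mem_setOf_eq, Set.mem_Icc, not_and_or, not_le] at hx
    rcases hx with h | h
    · exact Or.inl (by simpa using h.not_ge)
    · exact Or.inr (Set.mem_Ioi.mpr h)
  -- integrability and moment equality for all k including 0
  have hμint' : ∀ k : ℕ, Integrable (fun x : ℝ => x ^ k) μ := by
    intro k
    cases k with
    | zero => simpa using integrable_const (1 : ℝ)
    | succ n => exact hμint (n + 1) (Nat.succ_le_succ (Nat.zero_le _))
  have hmom' : ∀ k : ℕ, ∫ x, x ^ k ∂ν = ∫ x, x ^ k ∂μ := by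
    intro k
    cases k with
    | zero => simp
    | succ n => exact hmom (n + 1) (Nat.succ_le_succ (Nat.zero_le _))
  -- integrals of polynomials agree
  have hpolyintμ : ∀ p : Polynomial ℝ, Integrable (fun x => p.eval x) μ := by
    intro p
    have hev : (fun x : ℝ => p.eval x)
        = fun x => ∑ i ∈ Finset.range (p.natDegree + 1), p.coeff i * x ^ i := by
      funext x; exact Polynomial.eval_eq_sum_range (p := p) x
    rw [hev]
    exact integrable_finset_sum _ fun i _ => (hμint' i).const_mul _
  have hpolyintν : ∀ p : Polynomial ℝ, Integrable (fun x => p.eval x) ν := by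
    intro p
    have hev : (fun x : ℝ => p.eval x)
        = fun x => ∑ i ∈ Finset.range (p.natDegree + 1), p.coeff i * x ^ i := by
      funext x; exact Polynomial.eval_eq_sum_range (p := p) x
    rw [hev]
    exact integrable_finset_sum _ fun i _ => (hνint i).const_mul _
  have hpoly : ∀ p : Polynomial ℝ, ∫ x, p.eval x ∂μ = ∫ x, p.eval x ∂ν := by
    intro p
    have hev : (fun x : ℝ => p.eval x)
        = fun x => ∑ i ∈ Finset.range (p.natDegree + 1), p.coeff i * x ^ i := by
      funext x; exact Polynomial.eval_eq_sum_range (p := p) x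
    rw [hev, integral_finset_sum _ (fun i _ => (hμint' i).const_mul _),
      integral_finset_sum _ (fun i _ => (hνint i).const_mul _)]
    refine Finset.sum_congr rfl fun i _ => ?_
    rw [integral_const_mul, integral_const_mul, hmom' i]
  -- integrals of bounded continuous ℝ≥0-valued functions agree
  have hint : ∀ f : ℝ →ᵇ ℝ≥0, ∫ x, (f x : ℝ) ∂μ = ∫ x, (f x : ℝ) ∂ν := by
    intro f
    have hfμ : Integrable (fun x => (f x : ℝ)) μ := f.integrable_of_nnreal μ
    have hfν : Integrable (fun x => (f x : ℝ)) ν := f.integrable_of_nnreal ν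
    have key : ∀ ε : ℝ, 0 < ε →
        |∫ x, (f x : ℝ) ∂μ - ∫ x, (f x : ℝ) ∂ν| ≤ 2 * ε := by
      intro ε hε
      obtain ⟨p, hp⟩ := exists_polynomial_near_of_continuousOn 0 K (fun x => (f x : ℝ))
        ((NNReal.continuous_coe.comp f.continuous).continuousOn) ε hε
      have habs : ∀ (ρ : Measure ℝ) [IsProbabilityMeasure ρ],
          (∀ᵐ x ∂ρ, x ∈ Set.Icc (0 : ℝ) K) → Integrable (fun x => (f x : ℝ)) ρ →
          Integrable (fun x => p.eval x) ρ →
          |∫ x, (f x : ℝ) ∂ρ - ∫ x, p.eval x ∂ρ| ≤ ε := by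
        intro ρ _ hρae hfρ hpρ
        rw [← integral_sub hfρ hpρ]
        calc |∫ x, ((f x : ℝ) - p.eval x) ∂ρ| ≤ ∫ x, |(f x : ℝ) - p.eval x| ∂ρ := by
              simpa [Real.norm_eq_abs] using
                norm_integral_le_integral_norm (μ := ρ) (fun x => (f x : ℝ) - p.eval x)
          _ ≤ ∫ _x, ε ∂ρ := by
              refine integral_mono_ae (hfρ.sub hpρ).abs (integrable_const _) ?_
              filter_upwards [hρae] with x hx
              rw [abs_sub_comm]
              exact (hp x hx).le
          _ = ε := by simp
      have h1 := habs μ hμae hfμ (hpolyintμ p)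
      have h2 := habs ν hνae hfν (hpolyintν p)
      have h3 := hpoly p
      have hsplit : ∫ x, (f x : ℝ) ∂μ - ∫ x, (f x : ℝ) ∂ν
          = (∫ x, (f x : ℝ) ∂μ - ∫ x, p.eval x ∂μ)
            + (∫ x, p.eval x ∂ν - ∫ x, (f x : ℝ) ∂ν) := by
        rw [← h3]; ring
      rw [hsplit]
      calc |(∫ x, (f x : ℝ) ∂μ - ∫ x, p.eval x ∂μ)
            + (∫ x, p.eval x ∂ν - ∫ x, (f x : ℝ) ∂ν)|
          ≤ |∫ x, (f x : ℝ) ∂μ - ∫ x, p.eval x ∂μ|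
            + |∫ x, p.eval x ∂ν - ∫ x, (f x : ℝ) ∂ν| := abs_add_le _ _
        _ ≤ ε + ε := add_le_add h1 (by rwa [abs_sub_comm] at h2)
        _ = 2 * ε := by ring
    by_contra hne
    have hd : 0 < |∫ x, (f x : ℝ) ∂μ - ∫ x, (f x : ℝ) ∂ν| :=
      abs_pos.mpr (sub_ne_zero.mpr hne)
    have := key (|∫ x, (f x : ℝ) ∂μ - ∫ x, (f x : ℝ) ∂ν| / 3) (by positivity)
    linarith
  -- conclude
  refine ext_of_forall_lintegral_eq_of_IsFiniteMeasure fun f => ?_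
  have h1 := BoundedContinuousFunction.toReal_lintegral_coe_eq_integral f μ
  have h2 := BoundedContinuousFunction.toReal_lintegral_coe_eq_integral f ν
  have hfin1 := (BoundedContinuousFunction.lintegral_lt_top_of_nnreal μ f).ne
  have hfin2 := (BoundedContinuousFunction.lintegral_lt_top_of_nnreal ν f).ne
  exact (ENNReal.toReal_eq_toReal_iff' hfin1 hfin2).mp (h1.trans ((hint f).trans h2.symm))
end

section
/- Let μ and ν be Borel probability measures on ℝ, both supported on [0,∞). Assume there exists K > 0 such that ν([0,K]) = 1, that μ has finite moments of every order, and that ∫ x^k dν(x) = ∫ x^k dμ(x) for every integer k ≥ 1. Then μ([0,K]) = 1, i.e., μ is also supported in the compact interval [0,K]. -/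
/-!
Since `ν` lives on `[0, K]`, its moments satisfy `∫ x ^ k ∂ν ≤ K ^ k`. If `μ` charged some
`[c, ∞)` with `c > K`, Markov's inequality would give `c ^ k μ([c, ∞)) ≤ ∫ x ^ k ∂μ = ∫ x ^ k ∂ν
≤ K ^ k`, i.e. `μ([c, ∞)) ≤ (K / c) ^ k → 0`. Hence `μ((K, ∞)) = 0`.
-/

open MeasureTheory Filter Set Topology

lemma integral_pow_le_of_ae_abs_le {ν : Measure ℝ} [IsProbabilityMeasure ν] {K : ℝ}
    (hν : ∀ᵐ x ∂ν, |x| ≤ K) (k : ℕ) : ∫ x, x ^ k ∂ν ≤ K ^ k := by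
  have hbound : ∀ᵐ x ∂ν, ‖x ^ k‖ ≤ K ^ k := by
    filter_upwards [hν] with x hx
    rw [norm_pow, Real.norm_eq_abs]
    exact pow_le_pow_left₀ (abs_nonneg x) hx k
  calc ∫ x, x ^ k ∂ν ≤ ‖∫ x, x ^ k ∂ν‖ := Real.le_norm_self _
    _ ≤ K ^ k * ν.real univ := norm_integral_le_of_norm_le_const hbound
    _ = K ^ k := by simp

lemma pow_mul_measureReal_Ici_le_integral_pow {μ : Measure ℝ} [IsFiniteMeasure μ]
    (hμ : ∀ᵐ x ∂μ, 0 ≤ x) {k : ℕ} (hint : Integrable (fun x : ℝ => x ^ k) μ) {c : ℝ}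
    (hc : 0 ≤ c) : c ^ k * μ.real (Ici c) ≤ ∫ x, x ^ k ∂μ := by
  have hsub : Ici c ⊆ {x | c ^ k ≤ x ^ k} := fun x hx => pow_le_pow_left₀ hc hx k
  calc c ^ k * μ.real (Ici c) ≤ c ^ k * μ.real {x | c ^ k ≤ x ^ k} :=
        mul_le_mul_of_nonneg_left (measureReal_mono hsub) (by positivity)
    _ ≤ ∫ x, x ^ k ∂μ :=
        mul_meas_ge_le_integral_of_nonneg (hμ.mono fun x hx => pow_nonneg hx k) hint _

section

variable {μ : Measure ℝ} [IsFiniteMeasure μ] {K : ℝ}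

lemma measure_Ici_eq_zero_of_integral_pow_le (hμ : ∀ᵐ x ∂μ, 0 ≤ x) (hK : 0 ≤ K)
    (hint : ∀ k : ℕ, 1 ≤ k → Integrable (fun x : ℝ => x ^ k) μ)
    (hmom : ∀ k : ℕ, 1 ≤ k → ∫ x, x ^ k ∂μ ≤ K ^ k) {c : ℝ} (hKc : K < c) :
    μ (Ici c) = 0 := by
  have hc : 0 < c := hK.trans_lt hKc
  have hle : ∀ k : ℕ, μ.real (Ici c) ≤ (K / c) ^ (k + 1) := by
    intro k
    rw [div_pow, le_div_iff₀ (by positivity), mul_comm]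
    exact (pow_mul_measureReal_Ici_le_integral_pow hμ (hint _ k.succ_pos) hc.le).trans
      (hmom _ k.succ_pos)
  have hlim : Tendsto (fun k : ℕ => (K / c) ^ (k + 1)) atTop (𝓝 0) :=
    (tendsto_pow_atTop_nhds_zero_of_lt_one (by positivity) ((div_lt_one hc).2 hKc)).comp
      (tendsto_add_atTop_nat 1)
  exact (measureReal_eq_zero_iff).1 (le_antisymm (ge_of_tendsto' hlim hle) measureReal_nonneg)

lemma measure_Ioi_eq_zero_of_integral_pow_le (hμ : ∀ᵐ x ∂μ, 0 ≤ x) (hK : 0 ≤ K)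
    (hint : ∀ k : ℕ, 1 ≤ k → Integrable (fun x : ℝ => x ^ k) μ)
    (hmom : ∀ k : ℕ, 1 ≤ k → ∫ x, x ^ k ∂μ ≤ K ^ k) : μ (Ioi K) = 0 := by
  obtain ⟨u, -, hKu, hu⟩ := exists_seq_strictAnti_tendsto K
  rw [← iUnion_Ici_eq_Ioi_of_lt_of_tendsto hKu hu]
  exact measure_iUnion_null fun n => measure_Ici_eq_zero_of_integral_pow_le hμ hK hint hmom (hKu n)

end

theorem compact_support_of_equal_moments_general
    (μ ν : Measure ℝ) [IsProbabilityMeasure μ] [IsProbabilityMeasure ν]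
    (hμsupp : μ (Set.Ici (0 : ℝ)) = 1)
    (K : ℝ) (hK : 0 < K) (hνK : ν (Set.Icc (0 : ℝ) K) = 1)
    (hμint : ∀ k : ℕ, 1 ≤ k → Integrable (fun x : ℝ => x ^ k) μ)
    (hmom : ∀ k : ℕ, 1 ≤ k → ∫ x, x ^ k ∂ν = ∫ x, x ^ k ∂μ) :
    μ (Set.Icc (0 : ℝ) K) = 1 := by
  have hμ : ∀ᵐ x ∂μ, 0 ≤ x :=
    (ae_mem_iff_measure_eq measurableSet_Ici.nullMeasurableSet).2 (by simpa using hμsupp)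
  have hν : ∀ᵐ x ∂ν, |x| ≤ K := by
    filter_upwards [(ae_mem_iff_measure_eq measurableSet_Icc.nullMeasurableSet).2
      (by simpa using hνK)] with x hx
    exact abs_le.2 ⟨by linarith [hx.1], hx.2⟩
  have hμK : μ (Ioi K) = 0 := measure_Ioi_eq_zero_of_integral_pow_le hμ hK.le hμint
    fun k hk => hmom k hk ▸ integral_pow_le_of_ae_abs_le hν k
  rw [← Ici_sdiff_Ioi, measure_sdiff_null hμK, hμsupp]

/-- If `ν` is supported on `[0,K]` and `μ` (supported on `[0,∞)`, with finite
moments of every order) has the same moments as `ν`, then `μ` is also supported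
on the compact interval `[0,K]`. -/
theorem compact_support_of_equal_moments
    (μ ν : Measure ℝ) [IsProbabilityMeasure μ] [IsProbabilityMeasure ν]
    (hμsupp : μ (Set.Ici (0 : ℝ)) = 1) (hνsupp : ν (Set.Ici (0 : ℝ)) = 1)
    (K : ℝ) (hK : 0 < K) (hνK : ν (Set.Icc (0 : ℝ) K) = 1)
    (hμint : ∀ k : ℕ, 1 ≤ k → Integrable (fun x : ℝ => x ^ k) μ)
    (hmom : ∀ k : ℕ, 1 ≤ k → ∫ x, x ^ k ∂ν = ∫ x, x ^ k ∂μ) :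
    μ (Set.Icc (0 : ℝ) K) = 1 :=
  compact_support_of_equal_moments_general μ ν hμsupp K hK hνK hμint hmom
end

section
/- Let t > 0 and let g : ℝ → ℝ be a bounded Borel measurable function. Define u(x) := ∫ g(x + y) dγ_t(y), where γ_t denotes the Gaussian probability measure on ℝ with mean 0 and variance t. Then u is differentiable at every x ∈ ℝ, and its derivative is given by u'(x) = ∫ g(x + y)·(y/t) dγ_t(y). -/
/-!
After the shift `y ↦ x + y`, `u x = ∫ g dγ(x, t) = ∫ g z · φ_t (z - x) dz`, so `x` only enters
through the Gaussian density, and `∂ₓ φ_t (z - x) = (z - x) / t · φ_t (z - x)`. Differentiation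
under the integral sign is justified by domination: for `|x' - x| ≤ 1` we have
`(z - x')² ≥ (z - x)² / 2 - 1`, so `|z - x'| φ_t (z - x')` is bounded by a multiple of
`(|z - x| + 1) exp (-(z - x)² / (4t))`, which is integrable.
-/

open MeasureTheory ProbabilityTheory Real
open scoped NNReal

lemma exp_neg_sq_sub_div_le {w s : ℝ} (hs : |s| ≤ 1) {v : ℝ} (hv : 0 ≤ v) :
    exp (-(w - s) ^ 2 / (2 * v)) ≤ exp (1 / (2 * v)) * exp (-(1 / (4 * v)) * w ^ 2) := by
  rw [← exp_add, exp_le_exp]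
  have hsq : w ^ 2 / 2 - 1 ≤ (w - s) ^ 2 := by
    nlinarith [sq_nonneg (w - 2 * s), sq_abs s, abs_nonneg s]
  have : 1 / (2 * v) + -(1 / (4 * v)) * w ^ 2 = -(w ^ 2 / 2 - 1) / (2 * v) := by ring
  rw [this]
  gcongr

lemma integrable_abs_add_one_mul_exp_neg_mul_sq {b : ℝ} (hb : 0 < b) :
    Integrable fun w : ℝ ↦ (|w| + 1) * exp (-b * w ^ 2) := by
  refine ((integrable_mul_exp_neg_mul_sq hb).norm.add (integrable_exp_neg_mul_sq hb)).congr
    (.of_forall fun w ↦ ?_)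
  simp only [Pi.add_apply, norm_mul, Real.norm_eq_abs, abs_of_pos (exp_pos _)]
  ring

namespace ProbabilityTheory

lemma integral_gaussianReal_comp_const_add {E : Type*} [NormedAddCommGroup E] [NormedSpace ℝ E]
    (μ : ℝ) (v : ℝ≥0) (f : ℝ → E) (x : ℝ) :
    ∫ y, f (x + y) ∂gaussianReal μ v = ∫ z, f z ∂gaussianReal (μ + x) v := by
  rw [← gaussianReal_map_const_add, (measurableEmbedding_addLeft x).integral_map]

lemma hasDerivAt_gaussianPDFReal_mean (μ : ℝ) (v : ℝ≥0) (x : ℝ) :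
    HasDerivAt (fun m ↦ gaussianPDFReal m v x) ((x - μ) / v * gaussianPDFReal μ v x) μ := by
  have h : HasDerivAt (fun m ↦ -(x - m) ^ 2 / (2 * v)) ((x - μ) / v) μ := by
    refine ((((hasDerivAt_id' μ).const_sub x).pow 2).neg.div_const (2 * (v : ℝ))).congr_deriv ?_
    ring
  refine (h.exp.const_mul (√(2 * π * v))⁻¹).congr_deriv ?_
  rw [gaussianPDFReal_def]
  ring

lemma abs_sub_div_mul_gaussianPDFReal_le {μ m : ℝ} (hm : |m - μ| ≤ 1) (v : ℝ≥0) (x : ℝ) :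
    |x - m| / v * gaussianPDFReal m v x ≤ (√(2 * π * v))⁻¹ * exp (1 / (2 * v)) / v *
      ((|x - μ| + 1) * exp (-(1 / (4 * v)) * (x - μ) ^ 2)) := by
  have hdist : |x - m| ≤ |x - μ| + 1 := by
    calc |x - m| = |(x - μ) - (m - μ)| := by ring_nf
      _ ≤ |x - μ| + |m - μ| := abs_sub _ _
      _ ≤ |x - μ| + 1 := by gcongr
  have hexp := exp_neg_sq_sub_div_le (w := x - μ) hm v.coe_nonneg
  rw [sub_sub_sub_cancel_right] at hexp
  calc |x - m| / v * gaussianPDFReal m v x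
      ≤ (|x - μ| + 1) / v * ((√(2 * π * v))⁻¹ *
          (exp (1 / (2 * v)) * exp (-(1 / (4 * v)) * (x - μ) ^ 2))) := by
        simp only [gaussianPDFReal_def]
        gcongr
    _ = _ := by ring

theorem hasDerivAt_integral_gaussianReal_mean {v : ℝ≥0} (hv : v ≠ 0) {g : ℝ → ℝ}
    (hg : AEStronglyMeasurable g) {M : ℝ} (hgM : ∀ x, |g x| ≤ M) (μ : ℝ) :
    HasDerivAt (fun m ↦ ∫ x, g x ∂gaussianReal m v)
      (∫ x, g x * ((x - μ) / v) ∂gaussianReal μ v) μ := by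
  simp_rw [integral_gaussianReal_eq_integral_smul hv, smul_eq_mul]
  set C := (√(2 * π * v))⁻¹ * exp (1 / (2 * v)) / v
  refine (hasDerivAt_integral_of_dominated_loc_of_deriv_le
    (F' := fun m x ↦ gaussianPDFReal m v x * (g x * ((x - m) / v)))
    (bound := fun x ↦ C * ((|x - μ| + 1) * exp (-(1 / (4 * v)) * (x - μ) ^ 2)) * M)
    (Metric.closedBall_mem_nhds μ one_pos)
    (.of_forall fun m ↦ (measurable_gaussianPDFReal m v).aestronglyMeasurable.mul hg)
    ((integrable_gaussianPDFReal μ v).mul_bdd hg (.of_forall hgM)) ?_ ?_ ?_ ?_).2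
  · exact (measurable_gaussianPDFReal μ v).aestronglyMeasurable.mul
      (hg.mul (by fun_prop : Measurable fun x : ℝ ↦ (x - μ) / v).aestronglyMeasurable)
  · refine .of_forall fun x m hm ↦ ?_
    rw [Metric.mem_closedBall, Real.dist_eq] at hm
    have hM : 0 ≤ M := (abs_nonneg _).trans (hgM 0)
    rw [Real.norm_eq_abs, abs_mul, abs_mul, abs_div, NNReal.abs_eq,
      abs_of_nonneg (gaussianPDFReal_nonneg m v x)]
    calc _ = |g x| * (|x - m| / v * gaussianPDFReal m v x) := by ring
      _ ≤ M * (C * ((|x - μ| + 1) * exp (-(1 / (4 * v)) * (x - μ) ^ 2))) :=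
        mul_le_mul (hgM x) (abs_sub_div_mul_gaussianPDFReal_le hm v x)
          (mul_nonneg (by positivity) (gaussianPDFReal_nonneg m v x)) hM
      _ = _ := by ring
  · have hv' : (0 : ℝ) < v := NNReal.coe_pos.mpr (pos_iff_ne_zero.mpr hv)
    exact (((integrable_abs_add_one_mul_exp_neg_mul_sq (by positivity)).comp_sub_right μ).const_mul
      C).mul_const M
  · refine .of_forall fun x m _ ↦
      ((hasDerivAt_gaussianPDFReal_mean m v x).mul_const (g x)).congr_deriv ?_
    ring

end ProbabilityTheory

/-- Differentiability of a Gaussian mollification: for bounded measurable `g`,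
`x ↦ ∫ g(x+y) dγ_t(y)` is differentiable with derivative
`∫ g(x+y) (y/t) dγ_t(y)`. -/
theorem gaussian_smoothing_hasDerivAt
    (t : ℝ≥0) (ht : 0 < t)
    (g : ℝ → ℝ) (hg : Measurable g) (hgb : ∃ M : ℝ, ∀ z, |g z| ≤ M) (x : ℝ) :
    HasDerivAt (fun x' : ℝ => ∫ y, g (x' + y) ∂(gaussianReal 0 t))
      (∫ y, g (x + y) * (y / (t : ℝ)) ∂(gaussianReal 0 t)) x := by
  obtain ⟨M, hM⟩ := hgb
  convert hasDerivAt_integral_gaussianReal_mean ht.ne' hg.aestronglyMeasurable hM x using 1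
  · funext x'
    rw [integral_gaussianReal_comp_const_add, zero_add]
  · simpa using integral_gaussianReal_comp_const_add 0 t (fun z ↦ g z * ((z - x) / t)) x
end

section
/- Let T > 0 and C ≥ 0, and let Δ : [0,T] → [0,∞) be a continuous function such that for every s ∈ [0,T] one has Δ(s) ≤ C·∫₀^s (s − t)^{−1/2}·Δ(t) dt. Then Δ(s) = 0 for every s ∈ [0,T]. -/
open MeasureTheory

private lemma gronwall_step
    (T C D : ℝ) (hC : 0 ≤ C) (hCD : C ≤ D) (hD : 0 < D)
    (Δ : ℝ → ℝ) (hΔcont : ContinuousOn Δ (Set.Icc 0 T))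
    (hΔnonneg : ∀ s ∈ Set.Icc (0 : ℝ) T, 0 ≤ Δ s)
    (hineq : ∀ s ∈ Set.Icc (0 : ℝ) T,
      Δ s ≤ C * ∫ t in Set.Icc (0 : ℝ) s, (s - t) ^ (-(1 / 2 : ℝ)) * Δ t)
    (a b : ℝ) (ha0 : 0 ≤ a) (hab : a ≤ b) (hbT : b ≤ T)
    (hstep : b - a ≤ (1/(4*D))^2)
    (h0 : ∀ t ∈ Set.Icc (0:ℝ) a, Δ t = 0) :
    ∀ s ∈ Set.Icc (0:ℝ) b, Δ s = 0 := by
  have hb0 : (0:ℝ) ≤ b := ha0.trans hab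
  obtain ⟨x, hxK, hmax⟩ := isCompact_Icc.exists_isMaxOn (Set.nonempty_Icc.2 hb0)
    (hΔcont.mono (Set.Icc_subset_Icc_right hbT))
  have hx0 : (0:ℝ) ≤ x := hxK.1
  have hxb : x ≤ b := hxK.2
  have hxT : x ≤ T := hxb.trans hbT
  have hM0 : 0 ≤ Δ x := hΔnonneg x ⟨hx0, hxT⟩
  have hMle : Δ x ≤ 0 := by
    rcases le_or_gt x a with hxa | hax
    · exact le_of_eq (h0 x ⟨hx0, hxa⟩)
    · -- the integral estimate
      have hax' : a ≤ x := hax.le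
      -- integrability of the kernel
      have hker : IntegrableOn (fun t => (x - t) ^ (-(1/2:ℝ))) (Set.Ioc a x) volume := by
        have h1 : IntervalIntegrable (fun u : ℝ => u ^ (-(1/2:ℝ))) volume 0 (x - a) :=
          intervalIntegral.intervalIntegrable_rpow' (by norm_num)
        have h2 := h1.comp_sub_left x
        simp only [sub_zero, sub_sub_cancel] at h2
        exact (intervalIntegrable_iff_integrableOn_Ioc_of_le hax').1 h2.symm
      have hval : ∫ t in Set.Ioc a x, (x - t) ^ (-(1/2:ℝ)) = 2 * (x - a) ^ (1/2:ℝ) := by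
        rw [← intervalIntegral.integral_of_le hax',
          intervalIntegral.integral_comp_sub_left (fun u : ℝ => u ^ (-(1/2:ℝ))) x,
          sub_self, integral_rpow (Or.inl (by norm_num))]
        rw [show -(1/2:ℝ) + 1 = 1/2 by norm_num, Real.zero_rpow (by norm_num)]
        ring
      -- reduce the integral over Icc 0 x to Ioc a x
      have hredu : (∫ t in Set.Icc (0:ℝ) x, (x - t) ^ (-(1/2:ℝ)) * Δ t)
          = ∫ t in Set.Ioc a x, (x - t) ^ (-(1/2:ℝ)) * Δ t := by
        rw [show (∫ t in Set.Icc (0:ℝ) x, (x - t) ^ (-(1/2:ℝ)) * Δ t)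
            = ∫ t in Set.Icc (0:ℝ) x,
                (Set.Ioc a x).indicator (fun t => (x - t) ^ (-(1/2:ℝ)) * Δ t) t from
          setIntegral_congr_fun measurableSet_Icc (fun t ht => by
            by_cases hmem : t ∈ Set.Ioc a x
            · rw [Set.indicator_of_mem hmem]
            · rw [Set.indicator_of_notMem hmem]
              have hta : t ≤ a := by
                by_contra hta
                exact hmem ⟨lt_of_not_ge hta, ht.2⟩
              rw [h0 t ⟨ht.1, hta⟩, mul_zero])]
        rw [setIntegral_indicator measurableSet_Ioc,
          Set.inter_eq_right.2 (fun t (ht : t ∈ Set.Ioc a x) => Set.mem_Icc.2 ⟨ha0.trans ht.1.le, ht.2⟩)]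
      -- bound the integral
      have hbound : (∫ t in Set.Ioc a x, (x - t) ^ (-(1/2:ℝ)) * Δ t)
          ≤ Δ x * (2 * (x - a) ^ (1/2:ℝ)) := by
        have hmono : (∫ t in Set.Ioc a x, (x - t) ^ (-(1/2:ℝ)) * Δ t)
            ≤ ∫ t in Set.Ioc a x, Δ x * (x - t) ^ (-(1/2:ℝ)) := by
          refine integral_mono_of_nonneg ?_ (hker.const_mul (Δ x)) ?_
          · refine (ae_restrict_iff' measurableSet_Ioc).2 (ae_of_all _ fun t ht => ?_)
            exact mul_nonneg (Real.rpow_nonneg (by linarith [ht.2]) _)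
              (hΔnonneg t ⟨ha0.trans ht.1.le, ht.2.trans hxT⟩)
          · refine (ae_restrict_iff' measurableSet_Ioc).2 (ae_of_all _ fun t ht => ?_)
            have h1 : Δ t ≤ Δ x := hmax ⟨ha0.trans ht.1.le, ht.2.trans hxb⟩
            have h2 : (0:ℝ) ≤ (x - t) ^ (-(1/2:ℝ)) := Real.rpow_nonneg (by linarith [ht.2]) _
            calc (x - t) ^ (-(1/2:ℝ)) * Δ t ≤ (x - t) ^ (-(1/2:ℝ)) * Δ x :=
                  mul_le_mul_of_nonneg_left h1 h2
              _ = Δ x * (x - t) ^ (-(1/2:ℝ)) := mul_comm _ _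
        calc (∫ t in Set.Ioc a x, (x - t) ^ (-(1/2:ℝ)) * Δ t)
            ≤ ∫ t in Set.Ioc a x, Δ x * (x - t) ^ (-(1/2:ℝ)) := hmono
          _ = Δ x * ∫ t in Set.Ioc a x, (x - t) ^ (-(1/2:ℝ)) := integral_const_mul _ _
          _ = Δ x * (2 * (x - a) ^ (1/2:ℝ)) := by rw [hval]
      -- the contraction
      have hroot : (x - a) ^ (1/2:ℝ) ≤ 1/(4*D) := by
        have hq : (0:ℝ) < 1/(4*D) := by positivity
        have h3 : x - a ≤ (1/(4*D))^2 := by nlinarith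
        have h4 := Real.rpow_le_rpow (by linarith : (0:ℝ) ≤ x - a) h3
          (by norm_num : (0:ℝ) ≤ 1/2)
        rwa [← Real.rpow_natCast (1/(4*D)) 2, ← Real.rpow_mul hq.le,
          show ((2:ℕ):ℝ) * (1/2) = 1 by norm_num, Real.rpow_one] at h4
      have hfinal : Δ x ≤ (1/2) * Δ x := by
        have h1 : Δ x ≤ C * (Δ x * (2 * (x - a) ^ (1/2:ℝ))) :=
          (hineq x ⟨hx0, hxT⟩).trans (by
            rw [hredu]
            exact mul_le_mul_of_nonneg_left hbound hC)
        have h2 : C * (Δ x * (2 * (x - a) ^ (1/2:ℝ))) ≤ (1/2) * Δ x := by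
          have h3 : C * (2 * (x - a) ^ (1/2:ℝ)) ≤ 1/2 := by
            have h4 : (0:ℝ) ≤ (x - a) ^ (1/2:ℝ) := Real.rpow_nonneg (by linarith) _
            have : C * (2 * (x - a) ^ (1/2:ℝ)) ≤ D * (2 * (1/(4*D))) := by
              apply mul_le_mul hCD (by linarith) (by linarith) hD.le
            calc C * (2 * (x - a) ^ (1/2:ℝ)) ≤ D * (2 * (1/(4*D))) := this
              _ = 1/2 := by field_simp; ring
          nlinarith
        linarith
      linarith
  intro s hs
  exact le_antisymm ((hmax hs).trans hMle) (hΔnonneg s ⟨hs.1, hs.2.trans hbT⟩)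

/-- A Gronwall-type lemma with singular kernel: if a nonnegative continuous
function `Δ` on `[0,T]` satisfies `Δ(s) ≤ C ∫₀^s (s-t)^{-1/2} Δ(t) dt`, then
`Δ ≡ 0` on `[0,T]`. -/
theorem gronwall_singular_kernel
    (T C : ℝ) (hT : 0 < T) (hC : 0 ≤ C)
    (Δ : ℝ → ℝ) (hΔcont : ContinuousOn Δ (Set.Icc 0 T))
    (hΔnonneg : ∀ s ∈ Set.Icc (0 : ℝ) T, 0 ≤ Δ s)
    (hineq : ∀ s ∈ Set.Icc (0 : ℝ) T,
      Δ s ≤ C * ∫ t in Set.Icc (0 : ℝ) s, (s - t) ^ (-(1 / 2 : ℝ)) * Δ t) :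
    ∀ s ∈ Set.Icc (0 : ℝ) T, Δ s = 0 := by
  set D : ℝ := C + 1 with hDdef
  have hD : (0:ℝ) < D := by positivity
  have hCD : C ≤ D := by simp [hDdef]
  set δ : ℝ := (1/(4*D))^2 with hδdef
  have hδ : (0:ℝ) < δ := by positivity
  -- base case : Δ 0 = 0
  have hbase : Δ 0 = 0 := by
    have h1 := hineq 0 ⟨le_refl 0, hT.le⟩
    have h2 : (∫ t in Set.Icc (0:ℝ) 0, ((0:ℝ) - t) ^ (-(1/2:ℝ)) * Δ t) = 0 := by
      have : (volume.restrict (Set.Icc (0:ℝ) 0)) = 0 := by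
        rw [Measure.restrict_eq_zero, Set.Icc_self]
        exact measure_singleton 0
      rw [this, integral_zero_measure]
    rw [h2, mul_zero] at h1
    exact le_antisymm h1 (hΔnonneg 0 ⟨le_refl 0, hT.le⟩)
  -- induction
  have key : ∀ n : ℕ, ∀ s ∈ Set.Icc (0:ℝ) (min (n * δ) T), Δ s = 0 := by
    intro n
    induction n with
    | zero =>
      intro s hs
      have : min ((0:ℕ) * δ) T = 0 := by
        simp [min_eq_left hT.le]
      rw [this] at hs
      have : s = 0 := le_antisymm hs.2 hs.1
      rw [this]; exact hbase
    | succ n ih =>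
      have ha0 : (0:ℝ) ≤ min (n * δ) T := le_min (by positivity) hT.le
      have hab : min ((n:ℝ) * δ) T ≤ min (((n:ℕ)+1 : ℕ) * δ) T := by
        apply min_le_min_right
        push_cast
        nlinarith
      have hbT : min ((((n:ℕ)+1 : ℕ) : ℝ) * δ) T ≤ T := min_le_right _ _
      have hstep : min ((((n:ℕ)+1 : ℕ) : ℝ) * δ) T - min ((n:ℝ) * δ) T ≤ (1/(4*D))^2 := by
        rcases le_total ((n:ℝ) * δ) T with h | h
        · have : min ((((n:ℕ)+1 : ℕ) : ℝ) * δ) T ≤ ((n:ℝ) + 1) * δ := by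
            push_cast
            exact min_le_left _ _
          rw [min_eq_left h]
          have : ((n:ℝ) + 1) * δ - (n:ℝ) * δ = δ := by ring
          rw [hδdef] at *
          nlinarith [min_le_left ((((n:ℕ)+1 : ℕ) : ℝ) * (1/(4*D))^2) T]
        · rw [min_eq_right h, min_eq_right (by push_cast; nlinarith : T ≤ (((n:ℕ)+1 : ℕ) : ℝ) * δ)]
          simp [hδ.le]
          positivity
      exact gronwall_step T C D hC hCD hD Δ hΔcont hΔnonneg hineq _ _ ha0 hab hbT hstep ih
  intro s hs
  obtain ⟨n, hn⟩ := exists_nat_ge (T / δ)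
  have hnT : T ≤ n * δ := by
    rw [div_le_iff₀ hδ] at hn
    linarith
  have := key n s (by rw [min_eq_right hnT]; exact hs)
  exact this
end

section
/- Let A be a nonempty compact metric space, let d ≥ 1, and let b : A → ℝ^d and L : A → ℝ be continuous. Assume that the set S := {(b(a), y) ∈ ℝ^d × ℝ : a ∈ A, y ≤ L(a)} is convex. Then for every Borel probability measure π on A there exists a ∈ A such that b(a) = ∫_A b(a') dπ(a') and ∫_A L(a') dπ(a') ≤ L(a). -/
open MeasureTheory

/-- Filippov-type measurable selection input: under the convexity condition on
`{(b(a), y) : a ∈ A, y ≤ L(a)}`, every randomized control (probability measure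
on `A`) can be replaced by a single action `a` matching the mean drift and
improving the mean running reward. -/
theorem filippov_convexity_selection
    (A : Type*) [MetricSpace A] [CompactSpace A] [Nonempty A]
    [MeasurableSpace A] [BorelSpace A]
    (d : ℕ) (hd : 1 ≤ d)
    (b : A → (Fin d → ℝ)) (L : A → ℝ)
    (hb : Continuous b) (hL : Continuous L)
    (hconv : Convex ℝ {p : (Fin d → ℝ) × ℝ | ∃ a : A, p.1 = b a ∧ p.2 ≤ L a})
    (π : Measure A) [IsProbabilityMeasure π] :
    ∃ a : A, b a = ∫ a', b a' ∂π ∧ (∫ a', L a' ∂π) ≤ L a := by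
  set S : Set ((Fin d → ℝ) × ℝ) := {p | ∃ a : A, p.1 = b a ∧ p.2 ≤ L a} with hS
  set f : A → (Fin d → ℝ) × ℝ := fun a => (b a, L a) with hf
  have hfc : Continuous f := hb.prodMk hL
  have hfi : Integrable f π := hfc.integrable_of_hasCompactSupport
    (HasCompactSupport.of_compactSpace f)
  have hSc : IsClosed S := by
    apply IsSeqClosed.isClosed
    intro p q hp hpq
    choose a ha1 ha2 using hp
    obtain ⟨a₀, -, φ, hφ, hφt⟩ := isCompact_univ.tendsto_subseq (fun n => Set.mem_univ (a n))
    refine ⟨a₀, ?_, ?_⟩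
    · have h1 : Filter.Tendsto (fun n => b (a (φ n))) Filter.atTop (nhds (b a₀)) :=
        (hb.continuousAt.tendsto).comp hφt
      have h2 : Filter.Tendsto (fun n => (p (φ n)).1) Filter.atTop (nhds q.1) :=
        ((continuous_fst.tendsto q).comp (hpq.comp hφ.tendsto_atTop))
      have := h2.congr (fun n => (ha1 (φ n)))
      exact tendsto_nhds_unique this h1
    · have h1 : Filter.Tendsto (fun n => L (a (φ n))) Filter.atTop (nhds (L a₀)) :=
        (hL.continuousAt.tendsto).comp hφt
      have h2 : Filter.Tendsto (fun n => (p (φ n)).2) Filter.atTop (nhds q.2) :=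
        ((continuous_snd.tendsto q).comp (hpq.comp hφ.tendsto_atTop))
      exact le_of_tendsto_of_tendsto h2 h1 (Filter.Eventually.of_forall fun n => ha2 (φ n))
  have hmem : ∫ a', f a' ∂π ∈ S :=
    hconv.integral_mem hSc (Filter.Eventually.of_forall fun a => ⟨a, rfl, le_rfl⟩) hfi
  obtain ⟨a, ha1, ha2⟩ := hmem
  have hfst : (∫ a', f a' ∂π).1 = ∫ a', b a' ∂π := fst_integral hfi
  have hsnd : (∫ a', f a' ∂π).2 = ∫ a', L a' ∂π := snd_integral hfi
  exact ⟨a, by rw [← hfst, ha1], by rw [← hsnd]; exact ha2⟩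
end
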